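/- arXiv:1103.0856 — 3 statements merged into one kernel-verified Lean document; each statement's English description precedes it below -/
import Mathlib

section
/- Let 0 < r < 1 be rational. The sequence S(r) admits a decomposition S(r) = (S_1, S_2, S_1, S_2) where each S_i is a palindrome (equal to its reverse); moreover if r = [m_1,...,m_k] with k ≥ 2 then S_1 begins and ends with m_1 + 1 and S_2 begins and ends with m_1. -/
/-- The exponent-letter word `u_{q/p} = a^{ε₁} b^{ε₂} ⋯ a^{ε_{2p-1}} b^{ε_{2p}}`,
encoded as a list of letters `(generator, sign)` with `true = a`, `false = b`,
and sign `true` meaning exponent `+1`.  Here (0-indexed) `ε_{j+1} = (-1)^⌊jq/p⌋`. -/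
def epsWord (p q : ℕ) : List (Bool × Bool) :=
  (List.range (2 * p)).map fun j => (decide (j % 2 = 0), decide ((j * q / p) % 2 = 0))

/-- The S-sequence of slope `q/p`: run lengths of the sign pattern `⌊jq/p⌋ mod 2`. -/
def signRuns (p q : ℕ) : List ℕ :=
  (((List.range (2 * p)).map fun j => (j * q / p) % 2).splitBy (· == ·)).map List.length

/-- The S-sequence of a rational number. -/
def SseqQ (r : ℚ) : List ℕ := signRuns r.den r.num.toNat

/-- Continued fraction `[m₁, m₂, …, m_k] = 1/(m₁ + 1/(m₂ + ⋯ + 1/m_k))`. -/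
def contFrac : List ℕ → ℚ
  | [] => 0
  | m :: l => 1 / (m + contFrac l)

/-! Write `r = q / p`. The sign `⌊j q / p⌋ mod 2` is constant exactly on the blocks
`⌈i p / q⌉ ≤ j < ⌈(i + 1) p / q⌉`, and `⌈(q + i) p / q⌉ = p + ⌈i p / q⌉`, so `S(r) = T ++ T` with
`Tᵢ = ⌈(i + 1) p / q⌉ - ⌈i p / q⌉` for `i < q`. Since `⌈a / q⌉ + ⌈b / q⌉ = k + 1` whenever
`a + b = k q + 1`, we get `Tᵢ = Tⱼ` as soon as `(i + j + 1) p ≡ 1 [MOD q]`; hence cutting `T` at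
`l = p⁻¹ mod q` gives two palindromes. They begin with `T₀ = ⌈p / q⌉ = ⌊p / q⌋ + 1` and
`Tₗ = ⌊p / q⌋`, and `⌊p / q⌋ = ⌊1 / r⌋ = m₁`. -/

namespace List

theorem splitBy_beq_flatten_replicate {α : Type*} [BEq α] [LawfulBEq α] {n : ℕ → ℕ}
    {v : ℕ → α} {m : ℕ} (hn : ∀ i < m, 0 < n i) (hv : ∀ i, v i ≠ v (i + 1)) :
    ((range m).map fun i => replicate (n i) (v i)).flatten.splitBy (· == ·) =
      (range m).map fun i => replicate (n i) (v i) := by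
  apply splitBy_flatten
  · simp only [mem_map, mem_range, not_exists, not_and, replicate_eq_nil_iff]
    exact fun i hi h => (hn i hi).ne' h
  · simp only [mem_map, forall_exists_index, and_imp, forall_apply_eq_imp_iff₂]
    exact fun i _ => isChain_replicate_of_rel _ (beq_self_eq_true _)
  · rw [isChain_map, isChain_range]
    intro i hi
    refine ⟨by simpa using (hn i (by omega)).ne', by simpa using (hn (i + 1) (by omega)).ne', ?_⟩
    simpa using hv i

theorem reverse_map_range' {α : Type*} {f : ℕ → α} {s n : ℕ}
    (h : ∀ i < n, f (s + n - 1 - i) = f (s + i)) :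
    ((range' s n).map f).reverse = (range' s n).map f := by
  rw [← map_reverse, reverse_range', map_map, range'_eq_map_range, map_map]
  exact map_congr_left fun i hi => h i (mem_range.mp hi)

end List

namespace Nat

theorem mul_ceilDiv_lt_add {q : ℕ} (hq : 0 < q) (x : ℕ) : q * (x ⌈/⌉ q) < x + q := by
  have := Nat.div_mul_le_self (x + q - 1) q
  rw [ceilDiv_eq_add_pred_div, mul_comm]
  omega

theorem mul_add_ceilDiv {q : ℕ} (hq : 0 < q) (k x : ℕ) : (q * k + x) ⌈/⌉ q = k + x ⌈/⌉ q := by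
  rw [ceilDiv_eq_add_pred_div, ceilDiv_eq_add_pred_div, add_assoc, add_tsub_assoc_of_le (by omega),
    Nat.mul_add_div hq]

theorem add_one_ceilDiv {q : ℕ} (hq : 0 < q) (x : ℕ) : (x + 1) ⌈/⌉ q = x / q + 1 := by
  rw [ceilDiv_eq_add_pred_div, show x + 1 + q - 1 = x + q by omega, Nat.add_div_right _ hq]

theorem ceilDiv_eq_div_add_one {p q : ℕ} (hq : 0 < q) (h : ¬ q ∣ p) : p ⌈/⌉ q = p / q + 1 := by
  have hmod : 0 < p % q := Nat.pos_of_ne_zero fun h' => h (Nat.dvd_of_mod_eq_zero h')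
  have := Nat.div_add_mod' p q
  have := Nat.mod_lt p hq
  rw [ceilDiv_eq_add_pred_div, Nat.div_eq_iff hq, add_mul, one_mul]
  omega

theorem ceilDiv_add_ceilDiv_of_add_eq {q x y k : ℕ} (hq : 0 < q) (h : x + y = q * k + 1) :
    x ⌈/⌉ q + y ⌈/⌉ q = k + 1 := by
  have hx := (ceilDiv_le_iff_le_mul hq).mp (le_refl (x ⌈/⌉ q))
  have hy := (ceilDiv_le_iff_le_mul hq).mp (le_refl (y ⌈/⌉ q))
  have hx' := mul_ceilDiv_lt_add hq x
  have hy' := mul_ceilDiv_lt_add hq y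
  apply le_antisymm
  · exact Nat.lt_succ_iff.mp (Nat.lt_of_mul_lt_mul_left (a := q) (by grind))
  · exact Nat.lt_of_mul_lt_mul_left (a := q) (by grind)

end Nat

def runLength (p q i : ℕ) : ℕ := (i + 1) * p ⌈/⌉ q - i * p ⌈/⌉ q

def runLengths (p q : ℕ) : List ℕ := (List.range q).map (runLength p q)

section RunLength

variable {p q : ℕ}

theorem runLength_pos (hq : 0 < q) (hqp : q ≤ p) (i : ℕ) : 0 < runLength p q i := by
  have hlt := Nat.mul_ceilDiv_lt_add hq (i * p)
  have hstep : ¬ (i + 1) * p ⌈/⌉ q ≤ i * p ⌈/⌉ q := by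
    rw [ceilDiv_le_iff_le_mul hq, add_one_mul]
    omega
  rw [runLength]
  omega

theorem runLength_add_left (hq : 0 < q) (i : ℕ) : runLength p q (q + i) = runLength p q i := by
  rw [runLength, runLength, show (q + i + 1) * p = q * p + (i + 1) * p by ring,
    show (q + i) * p = q * p + i * p by ring, Nat.mul_add_ceilDiv hq, Nat.mul_add_ceilDiv hq]
  omega

theorem div_eq_of_ceilDiv_le_of_lt (hp : 0 < p) (hq : 0 < q) {i j : ℕ}
    (hlo : i * p ⌈/⌉ q ≤ j) (hhi : j < (i + 1) * p ⌈/⌉ q) : j * q / p = i := by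
  rw [ceilDiv_le_iff_le_mul hq] at hlo
  rw [← not_le, ceilDiv_le_iff_le_mul hq, not_le, add_one_mul] at hhi
  rw [Nat.div_eq_iff hp, mul_comm j]
  omega

theorem map_range_ceilDiv_eq_flatten (hp : 0 < p) (hq : 0 < q) (m : ℕ) :
    (List.range (m * p ⌈/⌉ q)).map (fun j => j * q / p % 2) =
      ((List.range m).map fun i => List.replicate (runLength p q i) (i % 2)).flatten := by
  induction m with
  | zero => simp
  | succ m ih =>
    have hmono : m * p ⌈/⌉ q ≤ (m + 1) * p ⌈/⌉ q :=
      (gc_mul_ceilDiv hq).monotone_l (Nat.mul_le_mul_right p m.le_succ)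
    rw [show (m + 1) * p ⌈/⌉ q = m * p ⌈/⌉ q + runLength p q m by rw [runLength]; omega,
      List.range_add, List.map_append, ih, List.range_succ, List.map_append, List.flatten_append,
      List.map_map]
    congr 1
    simp only [List.map_cons, List.map_nil, List.flatten_cons, List.flatten_nil, List.append_nil,
      List.eq_replicate_iff, List.length_map, List.length_range, List.mem_map, List.mem_range,
      Function.comp_apply, true_and]
    rintro _ ⟨t, ht, rfl⟩
    rw [div_eq_of_ceilDiv_le_of_lt (i := m) hp hq (by omega) (by rw [runLength] at ht; omega)]

theorem signRuns_eq_runLengths_append (hq : 0 < q) (hqp : q ≤ p) :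
    signRuns p q = runLengths p q ++ runLengths p q := by
  have hp : 0 < p := hq.trans_le hqp
  have h2p : 2 * p = 2 * q * p ⌈/⌉ q := by
    rw [show 2 * q * p = q • (2 * p) by rw [smul_eq_mul]; ring, smul_ceilDiv hq]
  rw [signRuns, h2p, map_range_ceilDiv_eq_flatten hp hq,
    List.splitBy_beq_flatten_replicate (fun i _ => runLength_pos hq hqp i) (by omega),
    List.map_map, two_mul, List.range_add, List.map_append, runLengths]
  simp only [List.map_map, Function.comp_def, List.length_replicate, runLength_add_left hq]

end RunLength

section Palindrome

variable {p q : ℕ}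

theorem runLength_eq_of_modEq (hp : 0 < p) (hq : 0 < q) {i j : ℕ}
    (h : (i + j + 1) * p ≡ 1 [MOD q]) : runLength p q i = runLength p q j := by
  have hpos : 0 < (i + j + 1) * p := by positivity
  obtain ⟨k, hk⟩ := (Nat.modEq_iff_dvd' hpos).mp h.symm
  have hk : (i + j + 1) * p = q * k + 1 := by omega
  have h1 := Nat.ceilDiv_add_ceilDiv_of_add_eq hq
    (show i * p + (j + 1) * p = q * k + 1 by rw [← hk]; ring)
  have h2 := Nat.ceilDiv_add_ceilDiv_of_add_eq hq
    (show (i + 1) * p + j * p = q * k + 1 by rw [← hk]; ring)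
  rw [runLength, runLength]
  omega

theorem runLength_eq_div_of_mul_mod_eq_one (hq : 0 < q) {l : ℕ} (h : l * p % q = 1) :
    runLength p q l = p / q := by
  have hl : l * p = q * (l * p / q) + 1 := by rw [← h, Nat.div_add_mod]
  have h1 : 1 ⌈/⌉ q = 1 := by simpa using Nat.add_one_ceilDiv hq 0
  rw [runLength, add_one_mul, hl, add_assoc, add_comm 1 p, Nat.mul_add_ceilDiv hq,
    Nat.mul_add_ceilDiv hq, Nat.add_one_ceilDiv hq, h1, Nat.add_comm (p / q), ← Nat.add_assoc,
    Nat.add_sub_cancel_left]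

theorem exists_lt_mul_modEq_one (hq : 0 < q) (hcop : p.Coprime q) :
    ∃ l < q, l * p ≡ 1 [MOD q] := by
  have : NeZero q := ⟨hq.ne'⟩
  refine ⟨((p : ZMod q)⁻¹).val, ZMod.val_lt _, (ZMod.natCast_eq_natCast_iff _ _ _).mp ?_⟩
  rw [Nat.cast_mul, ZMod.natCast_zmod_val, Nat.cast_one, mul_comm, ZMod.coe_mul_inv_eq_one p hcop]

theorem runLengths_palindromic_split (hp : 0 < p) (hq : 0 < q) (hcop : p.Coprime q) :
    ∃ S1 S2 : List ℕ, runLengths p q = S1 ++ S2 ∧ S1.reverse = S1 ∧ S2.reverse = S2 ∧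
      (2 ≤ q → S1.head? = some (p / q + 1) ∧ S1.getLast? = some (p / q + 1) ∧
        S2.head? = some (p / q) ∧ S2.getLast? = some (p / q)) := by
  obtain ⟨l, hlq, hl⟩ := exists_lt_mul_modEq_one hq hcop
  have hS1 : ((List.range' 0 l).map (runLength p q)).reverse =
      (List.range' 0 l).map (runLength p q) :=
    List.reverse_map_range' fun i hi =>
      runLength_eq_of_modEq hp hq (by rwa [show 0 + l - 1 - i + (0 + i) + 1 = l by omega])
  have hS2 : ((List.range' l (q - l)).map (runLength p q)).reverse =
      (List.range' l (q - l)).map (runLength p q) :=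
    List.reverse_map_range' fun i hi => runLength_eq_of_modEq hp hq (by
      rw [show l + (q - l) - 1 - i + (l + i) + 1 = l + q * 1 by omega, add_mul, mul_assoc]
      exact (Nat.add_mul_mod_self_left _ _ _).trans hl)
  refine ⟨_, _, ?_, hS1, hS2, fun hq2 => ?_⟩
  · have hsplit := @List.range'_append_1 0 l (q - l)
    rw [Nat.zero_add, Nat.add_sub_cancel' hlq.le] at hsplit
    rw [runLengths, List.range_eq_range', ← hsplit, List.map_append]
  have hl1 : l * p % q = 1 := Eq.trans hl (Nat.mod_eq_of_lt hq2)
  have hl0 : l ≠ 0 := by rintro rfl; simp at hl1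
  have hndvd : ¬ q ∣ p := fun hd => by
    rw [Nat.mod_eq_zero_of_dvd (Dvd.dvd.mul_left hd l)] at hl1
    exact zero_ne_one hl1
  have hhead1 : ((List.range' 0 l).map (runLength p q)).head? = some (p / q + 1) := by
    rw [List.head?_map, List.head?_range', if_neg hl0, Option.map_some, runLength, zero_add,
      one_mul, zero_mul, zero_ceilDiv, Nat.sub_zero, Nat.ceilDiv_eq_div_add_one hq hndvd]
  have hhead2 : ((List.range' l (q - l)).map (runLength p q)).head? = some (p / q) := by
    rw [List.head?_map, List.head?_range', if_neg (by omega), Option.map_some,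
      runLength_eq_div_of_mul_mod_eq_one hq hl1]
  rw [← List.head?_reverse, hS1, ← List.head?_reverse, hS2]
  exact ⟨hhead1, hhead1, hhead2, hhead2⟩

end Palindrome

theorem contFrac_pos_lt_one {L : List ℕ} (hL : L ≠ []) (hpos : ∀ x ∈ L, 0 < x)
    (hlast : ∀ x ∈ L.getLast?, 2 ≤ x) : 0 < contFrac L ∧ contFrac L < 1 := by
  induction L with
  | nil => exact absurd rfl hL
  | cons m L ih =>
    have hgt : 1 < (m : ℚ) + contFrac L := by
      rcases L with _ | ⟨m', L⟩
      · have : (2 : ℚ) ≤ m := by exact_mod_cast hlast m rfl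
        rw [contFrac]
        linarith
      · have hm : (1 : ℚ) ≤ m := by exact_mod_cast hpos m List.mem_cons_self
        have := (ih (List.cons_ne_nil _ _) (fun x hx => hpos x (List.mem_cons_of_mem _ hx))
          (by simpa using hlast)).1
        linarith
    rw [contFrac]
    exact ⟨by positivity, (div_lt_one (by positivity)).mpr hgt⟩

theorem two_le_and_div_eq_of_div_eq_add {p q m : ℕ} {s : ℚ} (hs0 : 0 < s) (hs1 : s < 1)
    (h : (p : ℚ) / q = m + s) : 2 ≤ q ∧ p / q = m := by
  have hdiv : p / q = m := by
    rw [← Nat.floor_div_eq_div (K := ℚ), h, Nat.floor_eq_iff (by positivity)]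
    constructor <;> linarith
  refine ⟨?_, hdiv⟩
  by_contra! hq
  interval_cases q
  · simp only [CharP.cast_eq_zero, div_zero] at h
    linarith
  · simp only [Nat.cast_one, div_one, Nat.div_one] at h hdiv
    subst hdiv
    linarith

theorem Rat.den_div_num_toNat_eq_inv {r : ℚ} (hr : 0 < r) : (r.den : ℚ) / r.num.toNat = r⁻¹ := by
  have hnum : ((r.num.toNat : ℕ) : ℚ) = r.num := by
    exact_mod_cast Int.toNat_of_nonneg (Rat.num_pos.mpr hr).le
  conv_rhs => rw [← Rat.num_div_den r]
  rw [hnum, inv_div]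

theorem two_le_num_and_den_div_num_of_contFrac {L : List ℕ} (hlen : 2 ≤ L.length)
    (hpos : ∀ x ∈ L, 0 < x) (hlast : ∀ x ∈ L.getLast?, 2 ≤ x) :
    2 ≤ (contFrac L).num.toNat ∧ (contFrac L).den / (contFrac L).num.toNat = L.headI := by
  obtain ⟨m, m', L, rfl⟩ : ∃ m m' L', L = m :: m' :: L' := by
    match L, hlen with
    | m :: m' :: L', _ => exact ⟨m, m', L', rfl⟩
  obtain ⟨hs0, hs1⟩ := contFrac_pos_lt_one (L := m' :: L) (List.cons_ne_nil _ _)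
    (fun x hx => hpos x (List.mem_cons_of_mem _ hx)) (by simpa using hlast)
  have hr : 0 < contFrac (m :: m' :: L) := by rw [contFrac]; positivity
  refine two_le_and_div_eq_of_div_eq_add hs0 hs1 ?_
  rw [Rat.den_div_num_toNat_eq_inv hr, contFrac, one_div, inv_inv]
  rfl

theorem Sseq_palindromic_decomposition_general (L : List ℕ) (hpos : ∀ x ∈ L, 0 < x)
    (hlast : ∀ x ∈ L.getLast?, 2 ≤ x) (r : ℚ) (hr : r = contFrac L)
    (h0 : 0 < r) (h1 : r < 1) :
    ∃ S1 S2 : List ℕ, SseqQ r = S1 ++ S2 ++ S1 ++ S2 ∧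
      S1.reverse = S1 ∧ S2.reverse = S2 ∧
      (2 ≤ L.length →
        S1.head? = some (L.headI + 1) ∧ S1.getLast? = some (L.headI + 1) ∧
        S2.head? = some L.headI ∧ S2.getLast? = some L.headI) := by
  have hnum : 0 < r.num := Rat.num_pos.mpr h0
  have hq : 0 < r.num.toNat := by omega
  have hqp : r.num.toNat ≤ r.den := by have := Rat.num_lt_denom_iff.mpr h1; omega
  have hcop : r.den.Coprime r.num.toNat := by
    rw [show r.num.toNat = r.num.natAbs by omega]
    exact r.reduced.symm
  obtain ⟨S1, S2, hT, hS1, hS2, hends⟩ := runLengths_palindromic_split r.pos hq hcop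
  refine ⟨S1, S2, ?_, hS1, hS2, fun hlen => ?_⟩
  · rw [SseqQ, signRuns_eq_runLengths_append hq hqp, hT]
    simp only [List.append_assoc]
  · subst hr
    obtain ⟨hq2, hdiv⟩ := two_le_num_and_den_div_num_of_contFrac hlen hpos hlast
    rw [← hdiv]
    exact hends hq2

/-- `S(r)` admits a decomposition `(S₁, S₂, S₁, S₂)` with each `Sᵢ` a
palindrome; moreover if `r = [m₁,…,m_k]` with `k ≥ 2` then `S₁` begins and ends with
`m₁ + 1` and `S₂` begins and ends with `m₁`. -/
theorem Sseq_palindromic_decomposition (L : List ℕ) (hL : L ≠ []) (hpos : ∀ x ∈ L, 0 < x)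
    (hlast : ∀ x ∈ L.getLast?, 2 ≤ x) (r : ℚ) (hr : r = contFrac L)
    (h0 : 0 < r) (h1 : r < 1) :
    ∃ S1 S2 : List ℕ, SseqQ r = S1 ++ S2 ++ S1 ++ S2 ∧
      S1.reverse = S1 ∧ S2.reverse = S2 ∧
      (2 ≤ L.length →
        S1.head? = some (L.headI + 1) ∧ S1.getLast? = some (L.headI + 1) ∧
        S2.head? = some L.headI ∧ S2.getLast? = some L.headI) :=
  Sseq_palindromic_decomposition_general L hpos hlast r hr h0 h1
end

section
/- Let 0 < r < 1 be rational. The cyclic S-sequence CS(r) is symmetric: the cyclic sequence obtained from CS(r) by reversing its cyclic order is equivalent to CS(r) as a cyclic sequence. -/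
namespace List

variable {α : Type*} {r : α → α → Bool}

theorem splitBy_reverse (hr : ∀ x y, r x y = r y x) (l : List α) :
    l.reverse.splitBy r = ((l.splitBy r).map reverse).reverse := by
  rw [splitBy_eq_iff]
  refine ⟨by rw [← reverse_flatten, flatten_splitBy], by simp, ?_, ?_⟩
  · simp only [mem_reverse, mem_map, forall_exists_index, and_imp, forall_apply_eq_imp_iff₂]
    intro m hm
    rw [isChain_reverse]
    simpa only [hr] using isChain_of_mem_splitBy hm
  · rw [isChain_reverse, isChain_map]
    refine (isChain_getLast_head_splitBy r l).imp fun a b ⟨ha, hb, hab⟩ => ?_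
    refine ⟨by simpa using hb, by simpa using ha, ?_⟩
    rwa [getLast_reverse, head_reverse, hr]

theorem map_length_splitBy_reverse (hr : ∀ x y, r x y = r y x) (l : List α) :
    (l.reverse.splitBy r).map length = ((l.splitBy r).map length).reverse := by
  simp [splitBy_reverse hr, map_reverse, Function.comp_def]

theorem splitBy_rotate_isRotated {l : List α} {k : ℕ} (hk0 : 0 < k) (hk : k < l.length)
    (hcut : r l[k - 1] l[k] = false) (hwrap : r l[l.length - 1] l[0] = false) :
    (l.rotate k).splitBy r ~r l.splitBy r := by
  rw [rotate_eq_drop_append_take hk.le]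
  conv_rhs => rw [← take_append_drop k l]
  rw [splitBy_append, splitBy_append]
  · exact isRotated_append
  · rw [getLast?_take, head?_drop, if_neg hk0.ne', getElem?_eq_getElem (by omega),
      getElem?_eq_getElem hk, Option.some_or]
    simpa using hcut
  · rw [getLast?_drop, if_neg hk.not_ge, head?_take, if_neg hk0.ne', getLast?_eq_getElem?,
      head?_eq_getElem?, getElem?_eq_getElem (by omega), getElem?_eq_getElem (by omega)]
    simpa using hwrap

end List

def floorParity (p q : ℕ) (n : ℤ) : ℤ := n * q / p % 2

section floorParity

variable {p q : ℕ}

theorem floorParity_add_two_mul_mul (hp : 0 < p) (n t : ℤ) :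
    floorParity p q (n + 2 * p * t) = floorParity p q n := by
  have hp' : (p : ℤ) ≠ 0 := by positivity
  rw [floorParity, floorParity, show (n + 2 * p * t) * q = n * q + p * (2 * q * t) by ring,
    Int.add_mul_ediv_left _ _ hp', mul_assoc, Int.add_mul_emod_self_left]

theorem floorParity_eq_of_modEq (hp : 0 < p) {a b : ℤ} (h : a ≡ b [ZMOD 2 * p]) :
    floorParity p q a = floorParity p q b := by
  obtain ⟨t, ht⟩ := Int.modEq_iff_dvd.1 h
  rw [show b = a + 2 * p * t by omega, floorParity_add_two_mul_mul hp]

theorem floorParity_sub_eq (hp : 0 < p) {c m : ℤ} (hc : c * q + 1 = p * (2 * m + 1)) (n : ℤ) :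
    floorParity p q (c - n) = floorParity p q n := by
  have hp' : (0 : ℤ) < p := by exact_mod_cast hp
  have hdiv : (c - n) * q / p = 2 * m - n * q / p := by
    refine ((Int.ediv_emod_unique (r := p - 1 - n * q % p) hp').2 ⟨?_, ?_, ?_⟩).1
    · linear_combination -Int.emod_add_mul_ediv (n * q) p - hc
    · linarith [Int.emod_lt_of_pos (n * q) hp']
    · linarith [Int.emod_nonneg (n * q) hp'.ne']
  rw [floorParity, floorParity, hdiv]
  omega

theorem floorParity_zero : floorParity p q 0 = 0 := by
  simp [floorParity]

theorem floorParity_neg_one (hq : 0 < q) (hqp : q ≤ p) : floorParity p q (-1) = 1 := by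
  have hdiv : -1 * (q : ℤ) / p = -1 :=
    ((Int.ediv_emod_unique (r := p - q) (by omega)).2 ⟨by ring, by omega, by omega⟩).1
  rw [floorParity, hdiv]
  rfl

end floorParity

theorem exists_mul_add_one_eq_mul_odd {p q : ℕ} (hcop : q.Coprime p) :
    ∃ c m : ℤ, c * q + 1 = p * (2 * m + 1) := by
  obtain ⟨u, v, huv⟩ := Nat.isCoprime_iff_coprime.2 hcop
  obtain ⟨t, rfl⟩ | ⟨t, rfl⟩ := Int.even_or_odd v
  · obtain ⟨s, hs⟩ | ⟨s, hs⟩ := Int.even_or_odd (q : ℤ)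
    · have : (2 : ℤ) ∣ 1 := ⟨u * s + t * p, by rw [← huv, hs]; ring⟩
      norm_num at this
    -- `q` is odd, so shifting `c` by `p` changes the parity of the quotient.
    · exact ⟨p - u, t + s, by linear_combination -huv + p * hs⟩
  · exact ⟨-u, t, by linear_combination -huv⟩

def signPattern (p q : ℕ) : List ℕ := (List.range (2 * p)).map fun j => j * q / p % 2

section signPattern

variable {p q : ℕ}

@[simp]
theorem length_signPattern : (signPattern p q).length = 2 * p := by
  simp [signPattern]

theorem signRuns_eq : signRuns p q = ((signPattern p q).splitBy (· == ·)).map List.length := rfl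

theorem natCast_getElem_signPattern (hp : 0 < p) {j : ℕ} (hj : j < (signPattern p q).length)
    {n : ℤ} (hn : j ≡ n [ZMOD 2 * p]) :
    ((signPattern p q)[j] : ℤ) = floorParity p q n := by
  rw [← floorParity_eq_of_modEq hp hn]
  simp [signPattern, floorParity]

theorem reverse_signPattern (hp : 0 < p) {c m : ℤ} (hc : c * q + 1 = p * (2 * m + 1)) {k : ℕ}
    (hk : k ≡ c + 1 [ZMOD 2 * p]) :
    (signPattern p q).reverse = (signPattern p q).rotate k := by
  refine List.ext_getElem (by simp) fun i hi hi' => ?_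
  simp only [List.length_reverse, length_signPattern] at hi
  rw [List.getElem_reverse, List.getElem_rotate, ← Int.natCast_inj,
    natCast_getElem_signPattern hp _ (n := c - (c + 1 + i)),
    natCast_getElem_signPattern hp _ (n := c + 1 + i), floorParity_sub_eq hp hc]
  · rw [length_signPattern]
    push_cast
    exact (Int.mod_modEq _ _).trans (by simpa [add_comm] using hk.add_left (i : ℤ))
  · rw [length_signPattern, Int.modEq_iff_dvd]
    exact ⟨-1, by push_cast [Nat.sub_sub, Nat.cast_sub (show 1 + i ≤ 2 * p by omega)]; ring⟩

theorem signRuns_reverse_isRotated (hq : 0 < q) (hqp : q ≤ p) (hcop : q.Coprime p) :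
    (signRuns p q).reverse ~r signRuns p q := by
  have hp : 0 < p := by omega
  obtain ⟨c, m, hc⟩ := exists_mul_add_one_eq_mul_odd hcop
  set W := signPattern p q
  set k := ((c + 1) % (2 * p)).toNat
  have hk : (k : ℤ) ≡ c + 1 [ZMOD 2 * p] := by
    rw [Int.toNat_of_nonneg (Int.emod_nonneg _ (by omega))]
    exact Int.mod_modEq _ _
  have hkW : k < W.length := by
    have := Int.emod_lt_of_pos (c + 1) (show (0 : ℤ) < 2 * p by omega)
    simp only [W, length_signPattern]
    omega
  have hW0 : (W[0] : ℤ) = 0 := by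
    rw [natCast_getElem_signPattern hp _ (n := 0) rfl, floorParity_zero]
  have hWk : (W[k] : ℤ) = 1 := by
    rw [natCast_getElem_signPattern hp _ (n := c - (-1)) (by simpa using hk), floorParity_sub_eq hp hc,
      floorParity_neg_one hq hqp]
  have hk0 : 0 < k := Nat.pos_of_ne_zero fun h => by
    simp only [h] at hWk
    omega
  have hWk' : (W[k - 1] : ℤ) = 0 := by
    rw [natCast_getElem_signPattern hp _ (n := c - 0), floorParity_sub_eq hp hc, floorParity_zero]
    simpa [Nat.cast_sub hk0] using hk.sub_right 1
  have hWlast : (W[W.length - 1] : ℤ) = 1 := by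
    rw [natCast_getElem_signPattern hp _ (n := -1), floorParity_neg_one hq hqp]
    rw [length_signPattern, Int.modEq_iff_dvd]
    exact ⟨-1, by push_cast [Nat.cast_sub (show 1 ≤ 2 * p by omega)]; ring⟩
  rw [signRuns_eq, ← List.map_length_splitBy_reverse (fun _ _ => Bool.beq_comm),
    reverse_signPattern hp hc hk]
  refine (List.splitBy_rotate_isRotated hk0 hkW ?_ ?_).map _
  · exact beq_false_of_ne (by omega)
  · exact beq_false_of_ne (by omega)

end signPattern

/-- the cyclic S-sequence `CS(r)` is symmetric: reversing it yields a
cyclic permutation (rotation) of itself. -/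
theorem CSseq_symmetric (r : ℚ) (h0 : 0 < r) (h1 : r < 1) :
    (SseqQ r).reverse ~r SseqQ r := by
  have hnum : 0 < r.num := Rat.num_pos.2 h0
  have hden : r.num < r.den := Rat.num_lt_denom_iff.2 h1
  have hcop := r.reduced
  rw [show r.num.natAbs = r.num.toNat by omega] at hcop
  exact signRuns_reverse_isRotated (by omega) (by omega) hcop
end

section
/- Let r = [m_1, m_2, ..., m_k] with 0 < r < 1 and define r̃ = [m_3,...,m_k] if m_2 = 1 (requiring k ≥ 3), and r̃ = [m_2 − 1, m_3, ..., m_k] if m_2 ≥ 2. Writing S(r) with terms in {m_1, m_1+1}, let T(r) = (t_1, ..., t_s) be the sequence counting the lengths of the blocks of (m_1+1)'s separated by single m_1's (when m_2 = 1), respectively the lengths of the blocks of m_1's separated by single (m_1+1)'s (when m_2 ≥ 2). Then T(r) = S(r̃) if m_2 = 1, and T(r) equals the reverse of S(r̃) if m_2 ≥ 2. -/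
/-- `(t₁⟨m+1⟩, m, t₂⟨m+1⟩, m, …, t_s⟨m+1⟩, m)`. -/
def blocksA (m : ℕ) (T : List ℕ) : List ℕ :=
  (T.map fun t => List.replicate t (m + 1) ++ [m]).flatten

/-- `(m+1, t₁⟨m⟩, m+1, t₂⟨m⟩, …, m+1, t_s⟨m⟩)`. -/
def blocksB (m : ℕ) (T : List ℕ) : List ℕ :=
  (T.map fun t => (m + 1) :: List.replicate t m).flatten

namespace Nat

lemma add_mul_ceilDiv {q : ℕ} (hq : 0 < q) (x y : ℕ) : (x + y * q) ⌈/⌉ q = x ⌈/⌉ q + y := by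
  rw [ceilDiv_eq_add_pred_div, ceilDiv_eq_add_pred_div,
    show x + y * q + q - 1 = x + q - 1 + y * q by omega, Nat.add_mul_div_right _ _ hq]

lemma mul_sub_ceilDiv {q s : ℕ} (hs : s < q) (c : ℕ) : (c * q - s) ⌈/⌉ q = c := by
  rcases c with _ | c
  · simp
  · rw [show (c + 1) * q - s = (q - s) + c * q by rw [Nat.succ_mul]; omega,
      add_mul_ceilDiv (by omega), ceilDiv_eq_add_pred_div,
      Nat.div_eq_of_lt_le (k := 1) (by omega) (by omega)]
    omega

lemma ceilDiv_add_div_of_add_eq {q x y N : ℕ} (hq : 0 < q) (h : x + y = N * q) :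
    x ⌈/⌉ q + y / q = N := by
  have hy := Nat.div_add_mod y q
  have hc : y / q ≤ N := Nat.div_le_of_le_mul (by rw [mul_comm]; omega)
  have hx : x = (N - y / q) * q - y % q := by
    rw [Nat.sub_mul, mul_comm q] at *; omega
  rw [hx, mul_sub_ceilDiv (Nat.mod_lt y hq)]
  omega

lemma ceilDiv_le_ceilDiv {a a' : ℕ} (h : a ≤ a') (q : ℕ) : a ⌈/⌉ q ≤ a' ⌈/⌉ q :=
  Nat.div_le_div_right (by omega)

lemma ceilDiv_lt_ceilDiv_succ {p q : ℕ} (hq : 0 < q) (hqp : q ≤ p) (k : ℕ) :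
    k * p ⌈/⌉ q < (k + 1) * p ⌈/⌉ q := by
  calc k * p ⌈/⌉ q < (k * p + 1 * q) ⌈/⌉ q := by rw [add_mul_ceilDiv hq]; omega
    _ ≤ (k + 1) * p ⌈/⌉ q := ceilDiv_le_ceilDiv (by rw [Nat.add_mul]; omega) q

lemma gc_mul_ceilDiv_mul_div {p q : ℕ} (hp : 0 < p) (hq : 0 < q) :
    GaloisConnection (fun k => k * p ⌈/⌉ q) (fun j => j * q / p) := fun k j => by
  rw [ceilDiv_le_iff_le_mul hq, Nat.le_div_iff_mul_le hp, mul_comm q]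

end Nat

open List

lemma List.map_range_eq_flatten {α : Type*} (f : ℕ → α) {h : ℕ → ℕ} (hh : Monotone h)
    (h0 : h 0 = 0) (s : ℕ) :
    (range (h s)).map f
      = ((range s).map fun l => (range' (h l) (h (l + 1) - h l)).map f).flatten := by
  induction s with
  | zero => simp [h0]
  | succ s ih =>
    have hs : h s ≤ h (s + 1) := hh (Nat.le_succ s)
    rw [range_succ, map_append, flatten_append, ← ih, range_eq_range', range_eq_range',
      ← Nat.add_sub_cancel' hs, ← range'_append]
    simp

namespace GaloisConnection

variable {h u : ℕ → ℕ}

lemma u_eq_of_le_of_lt (gc : GaloisConnection h u) {l k : ℕ} (hl : h l ≤ k)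
    (hk : k < h (l + 1)) : u k = l :=
  le_antisymm (Nat.le_of_lt_succ (lt_of_not_ge fun H => (not_le.2 hk) ((gc _ _).2 H)))
    ((gc _ _).1 hl)

lemma map_range_u_mod_two (gc : GaloisConnection h u) (s : ℕ) :
    (range (h s)).map (fun j => u j % 2)
      = ((range s).map fun l => replicate (h (l + 1) - h l) (l % 2)).flatten := by
  rw [map_range_eq_flatten _ gc.monotone_l gc.l_bot]
  congr 1
  refine map_congr_left fun l _ => eq_replicate_iff.2 ⟨by simp, ?_⟩
  simp only [mem_map, mem_range'_1]
  rintro _ ⟨j, hj, rfl⟩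
  rw [gc.u_eq_of_le_of_lt hj.1 (by omega)]

lemma map_range_u_succ_sub_u (gc : GaloisConnection h u) (hh : StrictMono h) (s : ℕ) :
    (range (h s)).map (fun k => u (k + 1) - u k)
      = ((range s).map fun l => replicate (h (l + 1) - h l - 1) 0 ++ [1]).flatten := by
  rw [map_range_eq_flatten _ gc.monotone_l gc.l_bot]
  congr 1
  refine map_congr_left fun l _ => ?_
  have hl : h l < h (l + 1) := hh (by omega)
  have hl' : h (l + 1) < h (l + 1 + 1) := hh (by omega)
  rw [show h (l + 1) - h l = (h (l + 1) - h l - 1) + 1 by omega, range'_concat, map_append]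
  congr 1
  · refine eq_replicate_iff.2 ⟨by simp, ?_⟩
    simp only [mem_map, mem_range'_1]
    rintro _ ⟨k, hk, rfl⟩
    rw [gc.u_eq_of_le_of_lt (l := l) (by omega) (by omega),
      gc.u_eq_of_le_of_lt (l := l) (by omega) (by omega), Nat.sub_self]
  · have hk : h l + 1 * (h (l + 1) - h l - 1) = h (l + 1) - 1 := by omega
    rw [map_singleton, hk, Nat.sub_add_cancel (by omega : 1 ≤ h (l + 1)),
      gc.u_eq_of_le_of_lt le_rfl hl', gc.u_eq_of_le_of_lt (l := l) (by omega) (by omega)]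
    simp

end GaloisConnection

def ceilSteps (p q n : ℕ) : List ℕ :=
  (range n).map fun k => (k + 1) * p ⌈/⌉ q - k * p ⌈/⌉ q

def floorSteps (p q n : ℕ) : List ℕ :=
  (range n).map fun k => (k + 1) * p / q - k * p / q

def gapWord (T : List ℕ) : List ℕ :=
  (T.map fun t => replicate t 0 ++ [1]).flatten

lemma ceilSteps_mul_add {q : ℕ} (hq : 0 < q) (m a n : ℕ) :
    ceilSteps (m * q + a) q n = (ceilSteps a q n).map (m + ·) := by
  simp only [ceilSteps, map_map]
  refine map_congr_left fun k _ => ?_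
  have hmono := Nat.ceilDiv_le_ceilDiv (Nat.mul_le_mul_right a (k.le_add_right 1)) q
  rw [show (k + 1) * (m * q + a) = (k + 1) * a + ((k + 1) * m) * q by ring,
    show k * (m * q + a) = k * a + (k * m) * q by ring,
    Nat.add_mul_ceilDiv hq, Nat.add_mul_ceilDiv hq, Function.comp_apply, Nat.succ_mul k m]
  omega

lemma ceilSteps_eq_map_floorSteps {a b : ℕ} (hab : 0 < a + b) (n : ℕ) :
    ceilSteps a (a + b) n = (floorSteps b (a + b) n).map (1 - ·) := by
  simp only [ceilSteps, floorSteps, map_map]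
  refine map_congr_left fun k _ => ?_
  have hk := Nat.ceilDiv_add_div_of_add_eq hab (show k * a + k * b = k * (a + b) by ring)
  have hk1 := Nat.ceilDiv_add_div_of_add_eq hab
    (show (k + 1) * a + (k + 1) * b = (k + 1) * (a + b) by ring)
  have hmono := Nat.ceilDiv_le_ceilDiv (Nat.mul_le_mul_right a (k.le_add_right 1)) (a + b)
  have hmono' : k * b / (a + b) ≤ (k + 1) * b / (a + b) :=
    Nat.div_le_div_right (Nat.mul_le_mul_right b (k.le_add_right 1))
  simp only [Function.comp_apply]
  omega

lemma reverse_ceilSteps {q : ℕ} (hq : 0 < q) (p n : ℕ) :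
    (ceilSteps p q (n * q)).reverse = floorSteps p q (n * q) := by
  rw [ceilSteps, ← map_reverse, range_eq_range', reverse_range', map_map, floorSteps]
  refine map_congr_left fun k hk => ?_
  rw [mem_range] at hk
  have hk₁ := Nat.ceilDiv_add_div_of_add_eq hq
    (show (n * q - k) * p + k * p = (n * p) * q by
      rw [← Nat.add_mul, Nat.sub_add_cancel hk.le]; ring)
  have hk₂ := Nat.ceilDiv_add_div_of_add_eq hq
    (show (n * q - (k + 1)) * p + (k + 1) * p = (n * p) * q by
      rw [← Nat.add_mul, Nat.sub_add_cancel hk]; ring)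
  have hmono : k * p / q ≤ (k + 1) * p / q :=
    Nat.div_le_div_right (Nat.mul_le_mul_right p (k.le_add_right 1))
  rw [Function.comp_apply, show 0 + n * q - 1 - k + 1 = n * q - k by omega,
    show 0 + n * q - 1 - k = n * q - (k + 1) by omega]
  omega

lemma floorSteps_eq_gapWord {b : ℕ} (hb : 0 < b) (a n : ℕ) :
    floorSteps b (a + b) (n * (a + b)) = gapWord (ceilSteps a b (n * b)) := by
  have gc := Nat.gc_mul_ceilDiv_mul_div (p := a + b) (by omega) hb
  have hsplit : ∀ l, l * (a + b) ⌈/⌉ b = l * a ⌈/⌉ b + l := fun l => by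
    rw [Nat.mul_add, Nat.add_mul_ceilDiv hb]
  have htop : (n * b) * (a + b) ⌈/⌉ b = n * (a + b) := by
    rw [← zero_add ((n * b) * (a + b)), show n * b * (a + b) = n * (a + b) * b by ring,
      Nat.add_mul_ceilDiv hb, zero_ceilDiv, zero_add]
  have hmono := strictMono_nat_of_lt_succ (Nat.ceilDiv_lt_ceilDiv_succ hb (b.le_add_left a))
  rw [floorSteps, ← htop, gc.map_range_u_succ_sub_u hmono, gapWord, ceilSteps, map_map]
  congr 1
  refine map_congr_left fun l _ => ?_
  rw [hsplit, hsplit, Function.comp_apply]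
  congr 2
  have := Nat.ceilDiv_le_ceilDiv (Nat.mul_le_mul_right a (l.le_add_right 1)) b
  omega

lemma signRuns_eq_ceilSteps {p q : ℕ} (hq : 0 < q) (hqp : q ≤ p) :
    signRuns p q = ceilSteps p q (2 * q) := by
  have gc := Nat.gc_mul_ceilDiv_mul_div (p := p) (by omega) hq
  have hmono := Nat.ceilDiv_lt_ceilDiv_succ hq hqp
  have htop : (2 * q) * p ⌈/⌉ q = 2 * p := by
    rw [← zero_add ((2 * q) * p), show 2 * q * p = 2 * p * q by ring,
      Nat.add_mul_ceilDiv hq, zero_ceilDiv, zero_add]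
  rw [signRuns, ← htop, gc.map_range_u_mod_two, splitBy_flatten, map_map]
  · simp [ceilSteps, Function.comp_def]
  · simp only [mem_map, mem_range, not_exists, not_and]
    intro k _ h
    have := hmono k
    exact absurd (congrArg length h).symm (by simp only [length_nil, length_replicate]; omega)
  · simp only [mem_map, mem_range]
    rintro _ ⟨k, _, rfl⟩
    exact isChain_replicate_of_rel _ (beq_self_eq_true _)
  · rw [isChain_map, show 2 * q = (2 * q - 1) + 1 by omega, isChain_range_succ]
    intro k _
    have := hmono k
    have := hmono (k + 1)
    simp only [getLast_replicate, Nat.succ_eq_add_one, head_replicate, beq_eq_false_iff_ne, ne_eq,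
      replicate_eq_nil_iff, exists_prop]
    omega

lemma blocksA_eq_map_gapWord (m : ℕ) (T : List ℕ) :
    blocksA m T = (gapWord T).map (fun d => m + (1 - d)) := by
  simp [blocksA, gapWord, map_flatten, Function.comp_def]

lemma blocksB_reverse_eq_map_gapWord (m : ℕ) (T : List ℕ) :
    blocksB m T.reverse = (gapWord T).reverse.map (m + ·) := by
  simp [blocksB, gapWord, map_flatten, reverse_flatten, Function.comp_def, map_reverse]

lemma ceilSteps_eq_blocksA {b : ℕ} (hb : 0 < b) (m a n : ℕ) :
    ceilSteps (m * (a + b) + a) (a + b) (n * (a + b)) = blocksA m (ceilSteps a b (n * b)) := by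
  rw [ceilSteps_mul_add (by omega), ceilSteps_eq_map_floorSteps (by omega),
    floorSteps_eq_gapWord hb, map_map, blocksA_eq_map_gapWord]
  rfl

lemma ceilSteps_eq_blocksB {b : ℕ} (hb : 0 < b) (m a n : ℕ) :
    ceilSteps (m * (a + b) + b) (a + b) (n * (a + b))
      = blocksB m (ceilSteps a b (n * b)).reverse := by
  rw [ceilSteps_mul_add (by omega), ← reverse_reverse (ceilSteps b _ _),
    reverse_ceilSteps (by omega), floorSteps_eq_gapWord hb, blocksB_reverse_eq_map_gapWord]

lemma Rat.exists_coprime_div_of_pos_of_le_one {x : ℚ} (hx0 : 0 < x) (hx1 : x ≤ 1) :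
    ∃ a b : ℕ, 0 < b ∧ b ≤ a ∧ b.Coprime a ∧ x = b / a := by
  have hnum : 0 < x.num := Rat.num_pos.2 hx0
  have hcast : ((x.num.natAbs : ℕ) : ℚ) = x.num := by
    rw [Nat.cast_natAbs, Int.cast_abs, abs_of_pos (by exact_mod_cast hnum)]
  have hx : x = (x.num.natAbs : ℚ) / x.den := by rw [hcast, Rat.num_div_den]
  refine ⟨x.den, x.num.natAbs, by omega, ?_, x.reduced, hx⟩
  rw [hx, div_le_one (by positivity)] at hx1
  exact_mod_cast hx1

lemma SseqQ_eq_ceilSteps {x : ℚ} {p q : ℕ} (hq : 0 < q) (hqp : q ≤ p) (hcop : q.Coprime p)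
    (hx : x = q / p) : SseqQ x = ceilSteps p q (2 * q) := by
  have hx' : x = ((q : ℤ) : ℚ) / ((p : ℤ) : ℚ) := by rw [hx, Int.cast_natCast, Int.cast_natCast]
  have hcop' : (q : ℤ).natAbs.Coprime (p : ℤ).natAbs := hcop
  have hden : x.den = p := by
    rw [hx']
    exact_mod_cast Rat.den_div_eq_of_coprime (by omega) hcop'
  rw [SseqQ, hden, hx', Rat.num_div_eq_of_coprime (by omega) hcop', Int.toNat_natCast,
    signRuns_eq_ceilSteps hq hqp]

theorem SseqQ_one_div_add_one_div_one_add {m : ℕ} (hm : 0 < m) {x : ℚ} (hx0 : 0 < x)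
    (hx1 : x ≤ 1) :
    SseqQ (1 / (m + 1 / (1 + x))) = blocksA m (SseqQ x) := by
  obtain ⟨a, b, hb, hba, hcop, rfl⟩ := Rat.exists_coprime_div_of_pos_of_le_one hx0 hx1
  have ha : 0 < a := by omega
  have hr : 1 / ((m : ℚ) + 1 / (1 + b / a)) = ((a + b : ℕ) : ℚ) / ((m * (a + b) + a : ℕ) : ℚ) := by
    push_cast
    field_simp
  have hcop' : (a + b).Coprime (m * (a + b) + a) := by
    rw [Nat.coprime_mul_right_add_right]
    exact Nat.coprime_self_add_left.2 hcop
  rw [SseqQ_eq_ceilSteps (by omega) (Nat.le_add_right_of_le (Nat.le_mul_of_pos_left _ hm))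
    hcop' hr, SseqQ_eq_ceilSteps hb hba hcop rfl, ceilSteps_eq_blocksA hb]

theorem SseqQ_one_div_add_one_div_one_add_one_div {m : ℕ} (hm : 0 < m) {x : ℚ} (hx0 : 0 < x)
    (hx1 : x ≤ 1) :
    SseqQ (1 / (m + 1 / (1 + 1 / x))) = blocksB m (SseqQ x).reverse := by
  obtain ⟨a, b, hb, hba, hcop, rfl⟩ := Rat.exists_coprime_div_of_pos_of_le_one hx0 hx1
  have ha : 0 < a := by omega
  have hr : 1 / ((m : ℚ) + 1 / (1 + 1 / (b / a))) =
      ((a + b : ℕ) : ℚ) / ((m * (a + b) + b : ℕ) : ℚ) := by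
    push_cast
    field_simp
    ring
  have hcop' : (a + b).Coprime (m * (a + b) + b) := by
    rw [Nat.coprime_mul_right_add_right]
    exact Nat.coprime_add_self_left.2 hcop.symm
  rw [SseqQ_eq_ceilSteps (by omega) (Nat.le_add_right_of_le (Nat.le_mul_of_pos_left _ hm))
    hcop' hr, SseqQ_eq_ceilSteps hb hba hcop rfl, ceilSteps_eq_blocksB hb]

lemma pos_of_mem_signRuns {p q t : ℕ} (ht : t ∈ signRuns p q) : 0 < t := by
  obtain ⟨g, hg, rfl⟩ := mem_map.1 ht
  exact length_pos_of_ne_nil (ne_nil_of_mem_splitBy hg)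

lemma contFrac_nonneg : ∀ l : List ℕ, 0 ≤ contFrac l
  | [] => le_rfl
  | m :: l => by
    have := contFrac_nonneg l
    rw [contFrac]
    positivity

lemma contFrac_cons_pos {m : ℕ} (hm : 0 < m) (l : List ℕ) : 0 < contFrac (m :: l) := by
  have := contFrac_nonneg l
  rw [contFrac]
  positivity

lemma contFrac_cons_le_one {m : ℕ} (hm : 0 < m) (l : List ℕ) : contFrac (m :: l) ≤ 1 := by
  have := contFrac_nonneg l
  have : (1 : ℚ) ≤ m := by exact_mod_cast hm
  rw [contFrac, div_le_one (by positivity)]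
  linarith

/-- the T-sequence of `r = [m₁, m₂, …]` equals `S(r̃)` when `m₂ = 1`,
and the reverse of `S(r̃)` when `m₂ ≥ 2`, where `r̃ = [m₃,…]` resp. `[m₂−1, m₃, …]`. -/
theorem Tseq_eq_Sseq (m1 m2 : ℕ) (rest : List ℕ) (h1 : 0 < m1) (h2 : 0 < m2)
    (hpos : ∀ x ∈ rest, 0 < x)
    (hlast : ∀ x ∈ (m1 :: m2 :: rest).getLast?, 2 ≤ x)
    (r rt : ℚ) (hr : r = contFrac (m1 :: m2 :: rest))
    (hrt : rt = contFrac (if m2 = 1 then rest else (m2 - 1) :: rest)) :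
    ∃ T : List ℕ, (∀ t ∈ T, 0 < t) ∧
      (if m2 = 1 then SseqQ r = blocksA m1 T ∧ T = SseqQ rt
       else SseqQ r = blocksB m1 T ∧ T = (SseqQ rt).reverse) := by
  have hT : ∀ t ∈ SseqQ rt, 0 < t := fun _ => pos_of_mem_signRuns
  split_ifs at hrt ⊢ with hm2
  · subst hm2 hr hrt
    obtain ⟨y, ys, rfl⟩ : ∃ y ys, rest = y :: ys := by
      cases rest with
      | nil => exact absurd (hlast 1 rfl) (by decide)
      | cons y ys => exact ⟨y, ys, rfl⟩
    have hy : 0 < y := hpos y mem_cons_self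
    refine ⟨_, hT, ?_, rfl⟩
    rw [contFrac, contFrac, Nat.cast_one]
    exact SseqQ_one_div_add_one_div_one_add h1 (contFrac_cons_pos hy ys)
      (contFrac_cons_le_one hy ys)
  · have hm2' : 0 < m2 - 1 := by omega
    have hrt_inv : (m2 : ℚ) + contFrac rest = 1 + 1 / rt := by
      rw [hrt, contFrac, one_div_one_div, Nat.cast_pred h2]
      ring
    refine ⟨_, fun t ht => hT t (mem_reverse.1 ht), ?_, rfl⟩
    rw [hr, contFrac, contFrac, hrt_inv, hrt]
    exact SseqQ_one_div_add_one_div_one_add_one_div h1 (contFrac_cons_pos hm2' rest)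
      (contFrac_cons_le_one hm2' rest)
end
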